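/- arXiv:1211.4134 — 2 statements merged into one kernel-verified Lean document; each statement's English description precedes it below -/
import Mathlib

section
/- Let κ be a regular uncountable cardinal and let x be a bounded operator on ℓ²(κ). Then the set { δ < κ : ℓ²(δ) is an invariant subspace of both x and x* } is closed and unbounded in κ. -/
/-!
Invariance of ℓ²(S) under `x` only depends on the matrix entries `(x eᵢ) j` with `i ∈ S`, `j ∉ S`,
so it passes to unions, which gives closedness. For unboundedness: every vector of ℓ²(κ) has
countable support, hence (κ being regular uncountable) support bounded below κ. So every `β < κ`
has a bound `F β < κ` on the supports of `x e_β` and `x* e_β`, and the closure points of `F`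
(obtained as the supremum of the `ω` iterates of `δ ↦ sup_{β < δ} (F β + 1)`) are unbounded in κ.
-/

noncomputable section

open Set

/-- The Hilbert space ℓ²(o): square-summable families indexed by the ordinals below `o`. -/
abbrev L2 (o : Ordinal) : Type := ↥(lp (fun _ : o.ToType => ℂ) 2)

/-- Bounded linear operators on ℓ²(o). -/
abbrev Bd (o : Ordinal) : Type := L2 o →L[ℂ] L2 o

/-- The ordinal (below `o`) corresponding to an index `i` of ℓ²(o). -/
def ordOf {o : Ordinal} (i : o.ToType) : Ordinal := ((Ordinal.ToType.mk (o := o)).symm i : Ordinal)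

/-- `InvOn o S x` : the closed subspace of ℓ²(o) of functions supported on `S`
is an invariant subspace of `x`. -/
def InvOn (o : Ordinal) (S : Set Ordinal) (x : Bd o) : Prop :=
  ∀ f : L2 o, (∀ i : o.ToType, ordOf i ∉ S → f i = 0) →
    ∀ i : o.ToType, ordOf i ∉ S → x f i = 0

/-- `Dclub o C` (the algebra `D[C]`) is the set of bounded operators `x` on ℓ²(o) such
that for every `α ∈ C`, ℓ²(α) is an invariant subspace of both `x` and its adjoint. -/
def Dclub (o : Ordinal) (C : Set Ordinal) : Set (Bd o) :=
  {x | ∀ α ∈ C, InvOn o (Set.Iio α) x ∧ InvOn o (Set.Iio α) (star x)}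

/-- A club in (the ordinal) `o`: a closed unbounded subset of `o`. -/
def IsClubOrd (o : Ordinal) (C : Set Ordinal) : Prop :=
  C ⊆ Set.Iio o ∧
  (∀ s ⊆ C, s.Nonempty → sSup s < o → sSup s ∈ C) ∧
  (∀ α < o, ∃ β ∈ C, α < β)

/-- The least element of `C` strictly above `α`. -/
def clubSucc (C : Set Ordinal) (α : Ordinal) : Ordinal :=
  sInf {β | β ∈ C ∧ α < β}

/-- `memJ κ x` : the (Hilbert space) dimension of the range of `x` is `< κ`;
equivalently (for uncountable κ), the range of `x` is contained in the closure
of a set of cardinality `< κ`. -/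
def memJ (κ : Cardinal) {o : Ordinal} (x : Bd o) : Prop :=
  ∃ D : Set (L2 o), Cardinal.mk D < κ ∧ Set.range ⇑x ⊆ closure D


open Cardinal

lemma ordOf_lt {o : Ordinal} (i : o.ToType) : ordOf i < o :=
  (Ordinal.ToType.mk.symm i).2

@[simp] lemma ordOf_mk {o β : Ordinal} (h : β < o) :
    ordOf (Ordinal.ToType.mk ⟨β, h⟩ : o.ToType) = β := by
  simp [ordOf]

lemma ordOf_injective {o : Ordinal} : Function.Injective (ordOf : o.ToType → Ordinal) :=
  Subtype.val_injective.comp Ordinal.ToType.mk.symm.injective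

open Ordinal in
lemma Cardinal.IsRegular.exists_gt_closed_under {c : Cardinal} (hc : c.IsRegular) (hc' : ℵ₀ < c)
    {R : Ordinal → Ordinal → Prop} (hR : ∀ β < c.ord, ∃ γ < c.ord, ∀ η, R β η → η < γ)
    {α : Ordinal} (hα : α < c.ord) : ∃ δ < c.ord, α < δ ∧ ∀ β < δ, ∀ η, R β η → η < δ := by
  choose! F hF_lt hF using hR
  set g : Ordinal → Ordinal := fun δ => ⨆ i : δ.ToType, F (ordOf i) + 1
  have hg_lt : ∀ δ < c.ord, g δ < c.ord := fun δ hδ =>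
    iSup_add_one_lt_of_lt_cof (by rw [mk_toType, hc.cof_ord]; exact lt_ord.1 hδ)
      fun i => hF_lt _ ((ordOf_lt i).trans hδ)
  have hF_lt_g : ∀ δ, ∀ β < δ, F β < g δ := fun δ β hβ => by
    have := lt_iSup_add_one (fun i : δ.ToType => F (ordOf i)) (ToType.mk ⟨β, hβ⟩)
    rwa [ordOf_mk] at this
  have hnfp_lt : nfp g (Order.succ α) < c.ord :=
    nfp_lt_ord_of_isRegular hc hc'.ne' hg_lt ((isSuccLimit_ord hc.aleph0_le).succ_lt hα)
  refine ⟨_, hnfp_lt, (Order.lt_succ α).trans_le (le_nfp _ _), fun β hβ η hη => ?_⟩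
  obtain ⟨n, hn⟩ := lt_nfp_iff.1 hβ
  calc η < F β := hF β (hβ.trans hnfp_lt) η hη
    _ < g (g^[n] (Order.succ α)) := hF_lt_g _ β hn
    _ = g^[n + 1] (Order.succ α) := (Function.iterate_succ_apply' g n _).symm
    _ ≤ nfp g (Order.succ α) := iterate_le_nfp g _ (n + 1)

lemma exists_lt_forall_ordOf_lt_of_ne_zero {o : Ordinal} (ho : ℵ₀ < o.cof) (f : L2 o) :
    ∃ γ < o, ∀ j, f j ≠ 0 → ordOf j < γ := by
  have hsupp : (Function.support fun j => f j).Countable := by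
    refine ((lp.memℓp f).summable (p := 2) (by norm_num)).countable_support.mono fun j hj => ?_
    simp only [Function.mem_support, ne_eq] at hj ⊢
    positivity
  refine ⟨⨆ j : Function.support (fun j => f j), ordOf j.1 + 1,
    Ordinal.iSup_add_one_lt_of_lt_cof (hsupp.le_aleph0.trans_lt ho) fun j => ordOf_lt _,
    fun j hj =>
      Ordinal.lt_iSup_add_one (fun j : Function.support (fun j => f j) => ordOf j.1) ⟨j, hj⟩⟩

lemma invOn_iff_single {o : Ordinal} {S : Set Ordinal} {x : Bd o} :
    InvOn o S x ↔ ∀ i j, ordOf i ∈ S → ordOf j ∉ S → x (lp.single 2 i 1) j = 0 := by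
  refine ⟨fun h i j hi hj => h _ (fun k hk => lp.single_apply_ne 2 i 1 ?_) j hj,
    fun h f hf j hj => ?_⟩
  · rintro rfl
    exact hk hi
  have hsum : HasSum (fun i => x (lp.single 2 i (f i)) j) (x f j) :=
    ((lp.hasSum_single (by norm_num) f).mapL x).mapL (lp.evalCLM ℂ _ 2 j)
  have hterm : ∀ i, x (lp.single 2 i (f i)) j = 0 := fun i => by
    rw [← mul_one (f i), ← smul_eq_mul, lp.single_smul, map_smul, lp.coeFn_smul, Pi.smul_apply,
      smul_eq_mul]
    by_cases hi : ordOf i ∈ S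
    · rw [h i j hi hj, mul_zero]
    · rw [hf i hi, zero_mul]
  simp only [hterm] at hsum
  exact hsum.unique hasSum_zero

lemma invOn_biUnion {o : Ordinal} {ι : Type*} {s : Set ι} {S : ι → Set Ordinal} {x : Bd o}
    (h : ∀ k ∈ s, InvOn o (S k) x) : InvOn o (⋃ k ∈ s, S k) x := by
  simp only [invOn_iff_single, Set.mem_iUnion₂, not_exists] at h ⊢
  rintro i j ⟨k, hk, hi⟩ hj
  exact h k hk i j hi (hj k hk)

lemma invOn_Iio_csSup {o : Ordinal} {s : Set Ordinal} {x : Bd o} (hne : s.Nonempty)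
    (hbdd : BddAbove s) (h : ∀ δ ∈ s, InvOn o (Iio δ) x) : InvOn o (Iio (sSup s)) x := by
  rw [← (isLUB_csSup hne hbdd).biUnion_Iio_eq]
  exact invOn_biUnion h

lemma exists_gt_invOn_Iio {c : Cardinal} (hc : c.IsRegular) (hc' : ℵ₀ < c) (x : Bd c.ord)
    {α : Ordinal} (hα : α < c.ord) :
    ∃ δ < c.ord, α < δ ∧ InvOn c.ord (Iio δ) x ∧ InvOn c.ord (Iio δ) (star x) := by
  let R β η := ∃ i j, ordOf i = β ∧ ordOf j = η ∧
    (x (lp.single 2 i 1) j ≠ 0 ∨ star x (lp.single 2 i 1) j ≠ 0)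
  have hR : ∀ β < c.ord, ∃ γ < c.ord, ∀ η, R β η → η < γ := by
    intro β hβ
    have hcof : ℵ₀ < c.ord.cof := by rwa [hc.cof_ord]
    set i : c.ord.ToType := Ordinal.ToType.mk ⟨β, hβ⟩
    obtain ⟨γ₁, hγ₁, h₁⟩ := exists_lt_forall_ordOf_lt_of_ne_zero hcof (x (lp.single 2 i 1))
    obtain ⟨γ₂, hγ₂, h₂⟩ := exists_lt_forall_ordOf_lt_of_ne_zero hcof (star x (lp.single 2 i 1))
    refine ⟨max γ₁ γ₂, max_lt hγ₁ hγ₂, ?_⟩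
    rintro _ ⟨i', j, hi', rfl, hj⟩
    obtain rfl : i' = i := ordOf_injective (by simp [i, hi'])
    rcases hj with hj | hj
    exacts [lt_max_of_lt_left (h₁ j hj), lt_max_of_lt_right (h₂ j hj)]
  obtain ⟨δ, hδ, hαδ, hclosed⟩ := hc.exists_gt_closed_under hc' hR hα
  refine ⟨δ, hδ, hαδ, ?_, ?_⟩ <;> refine invOn_iff_single.2 fun i j hi hj => ?_ <;> by_contra hne
  exacts [hj (hclosed _ hi _ ⟨i, j, rfl, rfl, Or.inl hne⟩),
    hj (hclosed _ hi _ ⟨i, j, rfl, rfl, Or.inr hne⟩)]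

/-- **Lemma.** For κ regular uncountable and any bounded operator `x` on ℓ²(κ), the set
of `δ < κ` such that ℓ²(δ) is invariant under both `x` and `x*` is closed and unbounded
in κ. -/
theorem invariant_set_isClub (κ : Cardinal.{0}) (hreg : κ.IsRegular)
    (hunc : Cardinal.aleph0 < κ) (x : Bd κ.ord) :
    IsClubOrd κ.ord
      {δ | δ < κ.ord ∧ InvOn κ.ord (Set.Iio δ) x ∧ InvOn κ.ord (Set.Iio δ) (star x)} := by
  refine ⟨fun δ hδ => hδ.1, fun s hs hne hlt => ?_, fun α hα => ?_⟩
  · have hbdd : BddAbove s := ⟨κ.ord, fun δ hδ => (hs hδ).1.le⟩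
    exact ⟨hlt, invOn_Iio_csSup hne hbdd fun δ hδ => (hs hδ).2.1,
      invOn_Iio_csSup hne hbdd fun δ hδ => (hs hδ).2.2⟩
  · obtain ⟨δ, hδ, hαδ, hx, hx_star⟩ := exists_gt_invOn_Iio hreg hunc x hα
    exact ⟨δ, ⟨hδ, hx, hx_star⟩, hαδ⟩
end
end

section
/- Let κ be a regular uncountable cardinal, let C be a club in κ, and let lim(C) denote the set of δ < κ that are limit points of C (so lim(C) ⊆ C is again a club). Define χ : κ → {−1, +1} by χ(α) = −1 if there exists δ ∈ lim(C) with δ ≤ α < succ_C(δ), and χ(α) = +1 otherwise. Then: (i) for every δ ∈ C, χ is constant on the interval [δ, succ_C(δ)); and (ii) for every δ ∈ lim(C), χ is not constant on the interval [δ, succ_{lim(C)}(δ)). -/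
/-!
The intervals `[δ, succ_C δ)` with `δ ∈ C` are pairwise disjoint, so on each of them χ is `-1`
or `+1` according as `δ ∈ lim C` or not. For `δ ∈ lim C`, the next point `α = succ_C δ` of `C` is
not a limit point of `C`, yet it lies below `succ_{lim C} δ` because limit points are approached
by `C`; hence `χ δ = -1 ≠ 1 = χ α`. That `succ_{lim C} δ` exists at all uses regularity: the
supremum of the ω iterates of `succ_C` stays below `κ` and is a limit point of `C`.
-/

noncomputable section

/-- A club in (the ordinal) `o`: a closed unbounded subset of `o`. -/
def IsClubBelow (o : Ordinal) (C : Set Ordinal) : Prop :=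
  C ⊆ Set.Iio o ∧
  (∀ s ⊆ C, s.Nonempty → sSup s < o → sSup s ∈ C) ∧
  (∀ α < o, ∃ β ∈ C, α < β)

/-- `ConstOn h a b` : the function `h` is constant on the ordinal interval `[a, b)`. -/
def ConstOn {β : Type*} (h : Ordinal → β) (a b : Ordinal) : Prop :=
  ∀ ξ η : Ordinal, a ≤ ξ → ξ < b → a ≤ η → η < b → h ξ = h η

/-- The set of limit points of `C` below `o`: ordinals `δ` with `0 < δ = sup (C ∩ δ)`. -/
def limPts (o : Ordinal) (C : Set Ordinal) : Set Ordinal :=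
  {δ | δ < o ∧ 0 < δ ∧ δ = sSup (C ∩ Set.Iio δ)}

variable {o : Ordinal} {C : Set Ordinal} {α β δ : Ordinal}

theorem clubSucc_mem_and_lt (h : ∃ β ∈ C, α < β) : clubSucc C α ∈ C ∧ α < clubSucc C α :=
  csInf_mem h

theorem clubSucc_le (hβ : β ∈ C) (h : α < β) : clubSucc C α ≤ β :=
  csInf_le' ⟨hβ, h⟩

theorem le_of_le_lt_clubSucc (hβ : β ∈ C) (hβα : β ≤ α) (hα : α < clubSucc C δ) : β ≤ δ := by
  by_contra! h
  exact (clubSucc_le hβ h).trans hβα |>.not_gt hα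

theorem exists_mem_between_of_mem_limPts (hδ : δ ∈ limPts o C) (hβ : β < δ) :
    ∃ γ ∈ C, β < γ ∧ γ < δ := by
  obtain ⟨γ, ⟨hγC, hγδ⟩, hβγ⟩ := exists_lt_of_lt_csSup' (hδ.2.2 ▸ hβ)
  exact ⟨γ, hγC, hβγ, hγδ⟩

theorem limPts_subset (hclosed : ∀ s ⊆ C, s.Nonempty → sSup s < o → sSup s ∈ C) :
    limPts o C ⊆ C := by
  intro δ hδ
  obtain ⟨γ, hγC, -, hγδ⟩ := exists_mem_between_of_mem_limPts hδ hδ.2.1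
  rw [hδ.2.2]
  exact hclosed _ Set.inter_subset_left ⟨γ, hγC, hγδ⟩ (hδ.2.2 ▸ hδ.1)

theorem clubSucc_lt_of_mem_limPts (hβ : β ∈ limPts o C) (hδβ : δ < β) : clubSucc C δ < β := by
  obtain ⟨γ, hγC, hδγ, hγβ⟩ := exists_mem_between_of_mem_limPts hβ hδβ
  exact (clubSucc_le hγC hδγ).trans_lt hγβ

theorem clubSucc_notMem_limPts (hδ : δ < clubSucc C δ) : clubSucc C δ ∉ limPts o C := fun h =>
  (clubSucc_lt_of_mem_limPts h hδ).false

theorem iSup_mem_limPts {ι : Type} [Nonempty ι] {f : ι → Ordinal} (hfC : ∀ i, f i ∈ C)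
    (hf : ∀ i, f i < ⨆ i, f i) (ho : ⨆ i, f i < o) : ⨆ i, f i ∈ limPts o C := by
  have hbdd : BddAbove (C ∩ Set.Iio (⨆ i, f i)) := ⟨_, fun _ h => h.2.le⟩
  refine ⟨ho, zero_le.trans_lt (hf (Classical.arbitrary ι)), le_antisymm ?_ ?_⟩
  · exact Ordinal.iSup_le fun i => le_csSup hbdd ⟨hfC i, hf i⟩
  · exact csSup_le ⟨_, hfC (Classical.arbitrary ι), hf _⟩ fun _ h => h.2.le

theorem exists_mem_limPts_gt {κ : Cardinal.{0}} (hreg : κ.IsRegular)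
    (hunc : Cardinal.aleph0 < κ) (hCκ : C ⊆ Set.Iio κ.ord)
    (hunb : ∀ α < κ.ord, ∃ β ∈ C, α < β) (hα : α < κ.ord) :
    ∃ δ ∈ limPts κ.ord C, α < δ := by
  set g : ℕ → Ordinal := fun n => (clubSucc C)^[n] α
  have hgκ : ∀ n, g n < κ.ord := by
    intro n
    induction n with
    | zero => exact hα
    | succ n ih =>
      simp only [g, Function.iterate_succ_apply']
      exact hCκ (clubSucc_mem_and_lt (hunb _ ih)).1
  have hg_succ : ∀ n, g (n + 1) ∈ C ∧ g n < g (n + 1) := fun n => by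
    simpa only [g, Function.iterate_succ_apply'] using clubSucc_mem_and_lt (hunb _ (hgκ n))
  have hlt : ∀ n, g (n + 1) < ⨆ m, g (m + 1) := fun n =>
    (hg_succ (n + 1)).2.trans_le (Ordinal.le_iSup (fun m => g (m + 1)) (n + 1))
  have hsupκ : ⨆ n, g (n + 1) < κ.ord :=
    Ordinal.iSup_lt_of_lt_cof (by simpa [hreg.cof_ord] using hunc) fun n => hgκ (n + 1)
  refine ⟨_, iSup_mem_limPts (fun n => (hg_succ n).1) hlt hsupκ, ?_⟩
  exact (hg_succ 0).2.trans (hlt 0)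

theorem exists_limPts_le_lt_clubSucc_iff (hsub : limPts o C ⊆ C) (hδ : δ ∈ C)
    (hδα : δ ≤ α) (hα : α < clubSucc C δ) :
    (∃ δ' ∈ limPts o C, δ' ≤ α ∧ α < clubSucc C δ') ↔ δ ∈ limPts o C := by
  refine ⟨fun ⟨δ', hδ', hδ'α, hα'⟩ => ?_, fun h => ⟨δ, h, hδα, hα⟩⟩
  have : δ' = δ :=
    le_antisymm (le_of_le_lt_clubSucc (hsub hδ') hδ'α hα) (le_of_le_lt_clubSucc hδ hδα hα')
  exact this ▸ hδ'

/-- **Lemma.** Let κ be regular uncountable, `C` a club in κ, and let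
`χ : κ → {−1, +1}` take the value `−1` at `α` exactly when `δ ≤ α < succ_C δ` for some
limit point `δ` of `C`, and `+1` otherwise.  Then χ is constant on each interval
`[δ, succ_C δ)` for `δ ∈ C`, but is not constant on any interval
`[δ, succ_{lim C} δ)` for `δ ∈ lim C`. -/
theorem chi_lemma (κ : Cardinal.{0}) (hreg : κ.IsRegular)
    (hunc : Cardinal.aleph0 < κ)
    (C : Set Ordinal) (hC : IsClubBelow κ.ord C)
    (χ : Ordinal → ℤ)
    (hneg : ∀ α : Ordinal,
      (∃ δ ∈ limPts κ.ord C, δ ≤ α ∧ α < clubSucc C δ) → χ α = -1)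
    (hpos : ∀ α : Ordinal,
      (¬ ∃ δ ∈ limPts κ.ord C, δ ≤ α ∧ α < clubSucc C δ) → χ α = 1) :
    (∀ δ ∈ C, ConstOn χ δ (clubSucc C δ)) ∧
    (∀ δ ∈ limPts κ.ord C, ¬ ConstOn χ δ (clubSucc (limPts κ.ord C) δ)) := by
  obtain ⟨hCκ, hclosed, hunb⟩ := hC
  have hsub := limPts_subset hclosed
  have hiff {δ α : Ordinal} (hδ : δ ∈ C) := exists_limPts_le_lt_clubSucc_iff (α := α) hsub hδ
  refine ⟨fun δ hδ ξ η hξ hξ' hη hη' => ?_, fun δ hδ hconst => ?_⟩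
  · by_cases h : δ ∈ limPts κ.ord C
    · rw [hneg ξ ((hiff hδ hξ hξ').2 h), hneg η ((hiff hδ hη hη').2 h)]
    · rw [hpos ξ (mt (hiff hδ hξ hξ').1 h), hpos η (mt (hiff hδ hη hη').1 h)]
  · obtain ⟨hαC, hδα⟩ := clubSucc_mem_and_lt (hunb δ hδ.1)
    obtain ⟨hL, hδL⟩ :=
      clubSucc_mem_and_lt (exists_mem_limPts_gt hreg hunc hCκ hunb hδ.1)
    have hαL := clubSucc_lt_of_mem_limPts hL hδL
    have hχδ : χ δ = -1 := hneg δ ⟨δ, hδ, le_rfl, hδα⟩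
    have hχα : χ (clubSucc C δ) = 1 := hpos _ fun h =>
      clubSucc_notMem_limPts hδα <|
        (hiff hαC le_rfl (clubSucc_mem_and_lt (hunb _ (hCκ hαC))).2).1 h
    have := hconst δ _ le_rfl (hδα.trans hαL) hδα.le hαL
    rw [hχδ, hχα] at this
    norm_num at this
end
end
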